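/- Let α ∈ ℝ and let T : (ℝ/ℤ)² → (ℝ/ℤ)² be defined by T(x, y) = (x + α, y + x). Then for every ε > 0 there exists an open set U ⊆ (ℝ/ℤ)² containing (0,0) such that {n ∈ ℤ : Tⁿ(0,0) ∈ U} ⊆ {n ∈ ℤ : ‖n²α‖ < ε}. -/

import Mathlib

/-! The orbit of the origin is explicit: `Tⁿ(0,0) = (nα, n(n-1)/2 · α)`. Hence the continuous
homomorphism `φ(x, y) = x + 2y` of the torus sends `Tⁿ(0,0)` to `n²α`, and `U = φ⁻¹(B(0, ε))`
works. -/

/-- The skew product transformation `T(x, y) = (x + α, y + x)` of the 2-torus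
`(ℝ/ℤ)²`, as a bijection (so that iterates `Tⁿ` make sense for all `n : ℤ`). -/
noncomputable def skewT (α : ℝ) : Equiv.Perm (AddCircle (1 : ℝ) × AddCircle (1 : ℝ)) where
  toFun p := (p.1 + (α : AddCircle (1 : ℝ)), p.2 + p.1)
  invFun p := (p.1 - (α : AddCircle (1 : ℝ)), p.2 - p.1 + (α : AddCircle (1 : ℝ)))
  left_inv := by
    rintro ⟨x, y⟩
    simp only [Prod.mk.injEq]
    constructor <;> abel
  right_inv := by
    rintro ⟨x, y⟩
    simp only [Prod.mk.injEq]
    constructor <;> abel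

open Metric

local notation "𝕋" => AddCircle (1 : ℝ)

lemma skewT_apply (α : ℝ) (p : 𝕋 × 𝕋) : skewT α p = (p.1 + (α : 𝕋), p.2 + p.1) := rfl

lemma skewT_symm_apply (α : ℝ) (p : 𝕋 × 𝕋) :
    (skewT α)⁻¹ p = (p.1 - (α : 𝕋), p.2 - p.1 + (α : 𝕋)) := rfl

lemma skewT_zpow_apply (α : ℝ) (n : ℤ) (p : 𝕋 × 𝕋) :
    (skewT α ^ n) p =
      (p.1 + ((n * α : ℝ) : 𝕋), p.2 + n • p.1 + ((n * (n - 1) / 2 * α : ℝ) : 𝕋)) := by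
  induction n using Int.induction_on with
  | zero => simp
  | succ n ih =>
    rw [← mul_self_zpow, Equiv.Perm.mul_apply, ih, skewT_apply, add_smul, one_smul]
    have h₁ : (((n + 1 : ℤ) : ℝ) * α : ℝ) = ((n : ℤ) : ℝ) * α + α := by push_cast; ring
    have h₂ : (((n + 1 : ℤ) : ℝ) * ((n + 1 : ℤ) - 1) / 2 * α : ℝ) =
        ((n : ℤ) : ℝ) * (((n : ℤ) : ℝ) - 1) / 2 * α + ((n : ℤ) : ℝ) * α := by push_cast; ring
    rw [h₁, h₂, AddCircle.coe_add, AddCircle.coe_add]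
    ext <;> simp only <;> abel
  | pred n ih =>
    have hzpow : skewT α ^ (-n - 1 : ℤ) = (skewT α)⁻¹ * skewT α ^ (-n : ℤ) := by
      rw [sub_eq_neg_add, zpow_add, zpow_neg_one]
    rw [hzpow, Equiv.Perm.mul_apply, ih, skewT_symm_apply, sub_smul, one_smul]
    have h₁ : (((-n - 1 : ℤ) : ℝ) * α : ℝ) = ((-n : ℤ) : ℝ) * α - α := by push_cast; ring
    have h₂ : (((-n - 1 : ℤ) : ℝ) * ((-n - 1 : ℤ) - 1) / 2 * α : ℝ) =
        ((-n : ℤ) : ℝ) * (((-n : ℤ) : ℝ) - 1) / 2 * α - ((-n : ℤ) : ℝ) * α + α := by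
      push_cast; ring
    rw [h₁, h₂, AddCircle.coe_add, AddCircle.coe_sub, AddCircle.coe_sub]
    ext <;> simp only <;> abel

lemma skewT_zpow_origin_fst_add_two_snd (α : ℝ) (n : ℤ) :
    ((skewT α ^ n) ((0, 0) : 𝕋 × 𝕋)).1 + 2 • ((skewT α ^ n) ((0, 0) : 𝕋 × 𝕋)).2 =
      (((n : ℝ) ^ 2 * α : ℝ) : 𝕋) := by
  simp only [skewT_zpow_apply, zero_add, smul_zero, two_smul, ← AddCircle.coe_add]
  congr 1
  ring

/-- For every `ε > 0` there is an open set `U ⊆ (ℝ/ℤ)²` containing `(0,0)` such that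
`{n : ℤ | Tⁿ(0,0) ∈ U} ⊆ {n : ℤ | ‖n²α‖ < ε}`, where `T(x,y) = (x + α, y + x)` and
`‖x‖` is the distance from `x` to the nearest integer (the norm on `ℝ/ℤ`). -/
theorem skewT_orbit_near_zero_subset (α : ℝ) (ε : ℝ) (hε : 0 < ε) :
    ∃ U : Set (AddCircle (1 : ℝ) × AddCircle (1 : ℝ)),
      IsOpen U ∧ ((0, 0) : AddCircle (1 : ℝ) × AddCircle (1 : ℝ)) ∈ U ∧
      { n : ℤ | (skewT α ^ n) ((0, 0) : AddCircle (1 : ℝ) × AddCircle (1 : ℝ)) ∈ U } ⊆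
        { n : ℤ | ‖(((n : ℝ) ^ 2 * α : ℝ) : AddCircle (1 : ℝ))‖ < ε } := by
  refine ⟨(fun q : 𝕋 × 𝕋 ↦ q.1 + 2 • q.2) ⁻¹' ball 0 ε,
    isOpen_ball.preimage (by fun_prop), by simpa using hε, fun n hn ↦ ?_⟩
  simpa [skewT_zpow_origin_fst_add_two_snd] using hn
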